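/- The bracket μ*_{E'}(θ) defined by the paper's table (4.13) — including [X₁₁,X₁₂] = (1/2)(1+θ)X₃₂, [X₁₁,X₂₂] = θX₃₁, [X₁₁,X₂₃] = (1/2)(1−θ)X₂₁, [X₁₁,X₁₃] = −(1/2)(θ+1)(X₁₁−X₃₃), [X₁₁,X₃₃] = −θX₃₁, [X₁₂,X₁₃] = (1/2)(3θ−1)X₁₂, [X₁₂,X₂₁] = X₃₁, [X₁₂,X₂₃] = −(X₁₁−X₃₃), [X₁₂,X₂₂] = (θ+1)X₃₂, [X₁₂,X₃₃] = −(1/2)(θ+1)X₃₂, [X₁₃,X₂₁] = (1/2)(3θ+1)X₂₁, [X₁₃,X₂₂] = −θ(X₁₁−X₃₃), [X₁₃,X₂₃] = (1/2)(3θ+1)X₂₃, [X₁₃,X₃₁] = X₃₁, [X₁₃,X₃₂] = (1/2)(1−3θ)X₃₂, [X₁₃,X₃₃] = (1/2)(θ−1)(X₁₁−X₃₃), [X₂₂,X₂₃] = (θ−1)X₂₁, [X₂₂,X₃₃] = θX₃₁, [X₂₃,X₃₂] = X₃₁, [X₂₃,X₃₃] = (1/2)(θ−1)X₂₁, with all other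 brackets of basis elements zero — satisfies the Jacobi identity for every real θ, hence defines a Lie algebra structure on the 8-dimensional space dual to sl(3). -/
import Mathlib


noncomputable section

def dd (x y : Fin 8 → ℝ) (i j : Fin 8) : ℝ := x i * y j - y i * x j

/-- The bracket μ*_{E'}(θ) of table (4.13), on coordinates ordered as
X₁₁, X₂₂, X₁₂, X₂₁, X₁₃, X₃₁, X₂₃, X₃₂ (with X₃₃ = −X₁₁ − X₂₂, so
X₁₁ − X₃₃ = 2X₁₁ + X₂₂). -/
def brE' (θ : ℝ) (x y : Fin 8 → ℝ) : Fin 8 → ℝ :=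
  ![-(θ + 1) * dd x y 0 4 - 2 * θ * dd x y 4 1 - 2 * dd x y 2 6,
    -(1/2) * (θ + 1) * dd x y 0 4 - θ * dd x y 4 1 - dd x y 2 6,
    (1/2) * (3 * θ - 1) * dd x y 2 4,
    (1/2) * (1 - θ) * dd x y 0 6 + (1/2) * (3 * θ + 1) * dd x y 4 3 + (θ - 1) * dd x y 1 6,
    0,
    θ * dd x y 0 1 + dd x y 2 3 + dd x y 4 5 + dd x y 6 7,
    (1/2) * (3 * θ + 1) * dd x y 4 6,
    (1/2) * (1 + θ) * dd x y 0 2 + (θ + 1) * dd x y 2 1 + (1/2) * (1 - 3 * θ) * dd x y 4 7]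

lemma brE'_app0 (θ : ℝ) (x y : Fin 8 → ℝ) : brE' θ x y 0 = -(θ + 1) * dd x y 0 4 - 2 * θ * dd x y 4 1 - 2 * dd x y 2 6 := rfl
lemma brE'_app1 (θ : ℝ) (x y : Fin 8 → ℝ) : brE' θ x y 1 = -(1/2) * (θ + 1) * dd x y 0 4 - θ * dd x y 4 1 - dd x y 2 6 := rfl
lemma brE'_app2 (θ : ℝ) (x y : Fin 8 → ℝ) : brE' θ x y 2 = (1/2) * (3 * θ - 1) * dd x y 2 4 := rfl
lemma brE'_app3 (θ : ℝ) (x y : Fin 8 → ℝ) : brE' θ x y 3 = (1/2) * (1 - θ) * dd x y 0 6 + (1/2) * (3 * θ + 1) * dd x y 4 3 + (θ - 1) * dd x y 1 6 := rfl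
lemma brE'_app4 (θ : ℝ) (x y : Fin 8 → ℝ) : brE' θ x y 4 = 0 := rfl
lemma brE'_app5 (θ : ℝ) (x y : Fin 8 → ℝ) : brE' θ x y 5 = θ * dd x y 0 1 + dd x y 2 3 + dd x y 4 5 + dd x y 6 7 := rfl
lemma brE'_app6 (θ : ℝ) (x y : Fin 8 → ℝ) : brE' θ x y 6 = (1/2) * (3 * θ + 1) * dd x y 4 6 := rfl
lemma brE'_app7 (θ : ℝ) (x y : Fin 8 → ℝ) : brE' θ x y 7 = (1/2) * (1 + θ) * dd x y 0 2 + (θ + 1) * dd x y 2 1 + (1/2) * (1 - 3 * θ) * dd x y 4 7 := rfl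
lemma jac0 (θ : ℝ) (x y z : Fin 8 → ℝ) :
    brE' θ (brE' θ x y) z 0 + brE' θ (brE' θ y z) x 0 + brE' θ (brE' θ z x) y 0 = 0 := by
  simp only [brE'_app0, brE'_app1, brE'_app2, brE'_app3, brE'_app4, brE'_app5, brE'_app6, brE'_app7, dd]; ring
lemma jac1 (θ : ℝ) (x y z : Fin 8 → ℝ) :
    brE' θ (brE' θ x y) z 1 + brE' θ (brE' θ y z) x 1 + brE' θ (brE' θ z x) y 1 = 0 := by
  simp only [brE'_app0, brE'_app1, brE'_app2, brE'_app3, brE'_app4, brE'_app5, brE'_app6, brE'_app7, dd]; ring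
lemma jac2 (θ : ℝ) (x y z : Fin 8 → ℝ) :
    brE' θ (brE' θ x y) z 2 + brE' θ (brE' θ y z) x 2 + brE' θ (brE' θ z x) y 2 = 0 := by
  simp only [brE'_app0, brE'_app1, brE'_app2, brE'_app3, brE'_app4, brE'_app5, brE'_app6, brE'_app7, dd]; ring
lemma jac3 (θ : ℝ) (x y z : Fin 8 → ℝ) :
    brE' θ (brE' θ x y) z 3 + brE' θ (brE' θ y z) x 3 + brE' θ (brE' θ z x) y 3 = 0 := by
  simp only [brE'_app0, brE'_app1, brE'_app2, brE'_app3, brE'_app4, brE'_app5, brE'_app6, brE'_app7, dd]; ring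
lemma jac4 (θ : ℝ) (x y z : Fin 8 → ℝ) :
    brE' θ (brE' θ x y) z 4 + brE' θ (brE' θ y z) x 4 + brE' θ (brE' θ z x) y 4 = 0 := by
  simp only [brE'_app0, brE'_app1, brE'_app2, brE'_app3, brE'_app4, brE'_app5, brE'_app6, brE'_app7, dd]; ring
lemma jac5 (θ : ℝ) (x y z : Fin 8 → ℝ) :
    brE' θ (brE' θ x y) z 5 + brE' θ (brE' θ y z) x 5 + brE' θ (brE' θ z x) y 5 = 0 := by
  simp only [brE'_app0, brE'_app1, brE'_app2, brE'_app3, brE'_app4, brE'_app5, brE'_app6, brE'_app7, dd]; ring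
lemma jac6 (θ : ℝ) (x y z : Fin 8 → ℝ) :
    brE' θ (brE' θ x y) z 6 + brE' θ (brE' θ y z) x 6 + brE' θ (brE' θ z x) y 6 = 0 := by
  simp only [brE'_app0, brE'_app1, brE'_app2, brE'_app3, brE'_app4, brE'_app5, brE'_app6, brE'_app7, dd]; ring
lemma jac7 (θ : ℝ) (x y z : Fin 8 → ℝ) :
    brE' θ (brE' θ x y) z 7 + brE' θ (brE' θ y z) x 7 + brE' θ (brE' θ z x) y 7 = 0 := by
  simp only [brE'_app0, brE'_app1, brE'_app2, brE'_app3, brE'_app4, brE'_app5, brE'_app6, brE'_app7, dd]; ring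

/-- the bracket μ*_{E'}(θ) satisfies the Jacobi identity for every real θ. -/
theorem stmt9 (θ : ℝ) :
    ∀ x y z : Fin 8 → ℝ,
      brE' θ (brE' θ x y) z + brE' θ (brE' θ y z) x + brE' θ (brE' θ z x) y = 0 := by
  intro x y z
  funext i
  fin_cases i
  · exact jac0 θ x y z
  · exact jac1 θ x y z
  · exact jac2 θ x y z
  · exact jac3 θ x y z
  · exact jac4 θ x y z
  · exact jac5 θ x y z
  · exact jac6 θ x y z
  · exact jac7 θ x y z
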